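/- Fix M ≥ 2 and 0 < α < 1, and let w be the Prelec weighting function with calibrated parameter β = (log M)^{1−α}. Then w overweights probabilities below the uniform value and underweights those above it: w(q) > q for all q ∈ (0, 1/M), and w(q) < q for all q ∈ (1/M, 1). -/

import Mathlib

/- With `t = -log q`, the comparison of `w(q)` with `q` is that of `β t^α` with `t`. Writing
`t = t^(1-α) t^α` and `β = L^(1-α)`, this is the comparison of `L^(1-α)` with `t^(1-α)`, i.e. of `L`
with `t`, as `x ↦ x^(1-α)` is strictly increasing; and `L < t` means `q < exp (-L)`, which is `1/M`
for `L = log M`. -/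

/-- Prelec weighting function with parameters `α, β`: `w(q) = exp(-β(-log q)^α)` for
`q ∈ (0,1]`, extended by `w(0) = 0`. -/
noncomputable def prelec (α β q : ℝ) : ℝ :=
  if q = 0 then 0 else Real.exp (-β * (-Real.log q) ^ α)

open Real

theorem prelec_of_pos {α β q : ℝ} (hq : 0 < q) : prelec α β q = exp (-β * (-log q) ^ α) :=
  if_neg hq.ne'

section Calibrated

variable {α L t : ℝ}

theorem rpow_one_sub_mul_rpow_self (ht : 0 < t) : t ^ (1 - α) * t ^ α = t := by
  rw [← rpow_add ht, sub_add_cancel, rpow_one]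

theorem rpow_one_sub_mul_rpow_lt_iff (hL : 0 ≤ L) (hα : α < 1) (ht : 0 < t) :
    L ^ (1 - α) * t ^ α < t ↔ L < t := by
  conv_lhs => rhs; rw [← rpow_one_sub_mul_rpow_self (α := α) ht]
  rw [mul_lt_mul_iff_of_pos_right (rpow_pos_of_pos ht α),
    rpow_lt_rpow_iff hL ht.le (sub_pos.2 hα)]

theorem lt_rpow_one_sub_mul_rpow_iff (hL : 0 ≤ L) (hα : α < 1) (ht : 0 < t) :
    t < L ^ (1 - α) * t ^ α ↔ t < L := by
  conv_lhs => lhs; rw [← rpow_one_sub_mul_rpow_self (α := α) ht]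
  rw [mul_lt_mul_iff_of_pos_right (rpow_pos_of_pos ht α),
    rpow_lt_rpow_iff ht.le hL (sub_pos.2 hα)]

variable {q : ℝ}

theorem lt_prelec_rpow_one_sub_iff (hL : 0 ≤ L) (hα : α < 1) (hq0 : 0 < q) (hq1 : q < 1) :
    q < prelec α (L ^ (1 - α)) q ↔ q < exp (-L) := by
  have ht : 0 < -log q := neg_pos.2 (log_neg hq0 hq1)
  rw [prelec_of_pos hq0, ← log_lt_iff_lt_exp hq0, neg_mul, lt_neg,
    rpow_one_sub_mul_rpow_lt_iff hL hα ht, lt_neg, log_lt_iff_lt_exp hq0]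

theorem prelec_rpow_one_sub_lt_iff (hL : 0 ≤ L) (hα : α < 1) (hq0 : 0 < q) (hq1 : q < 1) :
    prelec α (L ^ (1 - α)) q < q ↔ exp (-L) < q := by
  have ht : 0 < -log q := neg_pos.2 (log_neg hq0 hq1)
  rw [prelec_of_pos hq0, ← lt_log_iff_exp_lt hq0, neg_mul, neg_lt,
    lt_rpow_one_sub_mul_rpow_iff hL hα ht, neg_lt, lt_log_iff_exp_lt hq0]

end Calibrated

theorem prelec_overweight_below_uniform_general (M : ℕ) (hM : 2 ≤ M) (α : ℝ)
    (hα1 : α < 1) :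
    (∀ q : ℝ, 0 < q → q < 1 / (M : ℝ) →
      prelec α (Real.log (M : ℝ) ^ ((1 : ℝ) - α)) q > q) ∧
    (∀ q : ℝ, 1 / (M : ℝ) < q → q < 1 →
      prelec α (Real.log (M : ℝ) ^ ((1 : ℝ) - α)) q < q) := by
  have hM1 : (1 : ℝ) ≤ M := by exact_mod_cast (by omega : 1 ≤ M)
  have hM0 : (0 : ℝ) < M := by positivity
  have hlogM : 0 ≤ log M := log_nonneg hM1
  have hexp : exp (-log M) = 1 / (M : ℝ) := by rw [exp_neg, exp_log hM0, one_div]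
  have hM_inv_le : 1 / (M : ℝ) ≤ 1 := div_le_one_of_le₀ hM1 hM0.le
  refine ⟨fun q hq0 hq => ?_, fun q hq hq1 => ?_⟩
  · exact (lt_prelec_rpow_one_sub_iff hlogM hα1 hq0 (hq.trans_le hM_inv_le)).2 (hexp ▸ hq)
  · exact (prelec_rpow_one_sub_lt_iff hlogM hα1 ((one_div_pos.2 hM0).trans hq) hq1).2
      (hexp ▸ hq)

/-- For `M ≥ 2` and `0 < α < 1`, the Prelec weighting function with calibrated
parameter `β = (log M)^(1-α)` overweights probabilities below `1/M` and underweights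
those above it. -/
theorem prelec_overweight_below_uniform (M : ℕ) (hM : 2 ≤ M) (α : ℝ)
    (hα0 : 0 < α) (hα1 : α < 1) :
    (∀ q : ℝ, 0 < q → q < 1 / (M : ℝ) →
      prelec α (Real.log (M : ℝ) ^ ((1 : ℝ) - α)) q > q) ∧
    (∀ q : ℝ, 1 / (M : ℝ) < q → q < 1 →
      prelec α (Real.log (M : ℝ) ^ ((1 : ℝ) - α)) q < q) :=
  prelec_overweight_below_uniform_general M hM α hα1
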